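/- Logical characterization of least program models: let ⟨ℛ, Q, C⟩ be an admissible triple and P a SQCLP(ℛ,Q,C)-program. Then the least model of P equals the set of qc-atoms derivable in the inference system SQCHL(ℛ,Q,C): M_P = { φ | φ is an observable defined qc-atom and P ⊢_{ℛ,Q,C} φ }. -/

import Mathlib

open scoped BigOperators

/-- A qualification domain: a bounded lattice equipped with an attenuation operation. -/
structure QualificationDomain (D : Type*) [Lattice D] [BoundedOrder D] where
  att : D → D → D
  att_assoc : ∀ d e f : D, att (att d e) f = att d (att e f)
  att_comm : ∀ d e : D, att d e = att e d
  att_mono : ∀ d d' e e' : D, d ≤ d' → e ≤ e' → att d e ≤ att d' e'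
  att_top : ∀ d : D, att d ⊤ = d
  att_bot : ∀ d : D, att d ⊥ = ⊥
  att_le : ∀ d e : D, att d e ≤ e
  att_ne_bot : ∀ d e : D, d ≠ ⊥ → e ≠ ⊥ → att d e ≠ ⊥
  att_inf : ∀ d e₁ e₂ : D, att d (e₁ ⊓ e₂) = att d e₁ ⊓ att d e₂

/-- First-order terms over variables `V` and data constructors `CS`. -/
inductive Trm (V : Type*) (CS : Type*) : Type _
  | var : V → Trm V CS
  | app : CS → List (Trm V CS) → Trm V CS

variable {V CS DP PP : Type*}

/-- Application of a substitution to a term. -/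
def Trm.subst (θ : V → Trm V CS) : Trm V CS → Trm V CS
  | .var X => θ X
  | .app c ts => .app c (ts.attach.map fun t => t.1.subst θ)
decreasing_by
  have := List.sizeOf_lt_of_mem t.2
  simp only [Trm.app.sizeOf_spec]
  omega

/-- Application of a valuation (ground substitution) to a term; ground terms are
terms over the empty set of variables. -/
def Trm.applyVal (η : V → Trm Empty CS) : Trm V CS → Trm Empty CS
  | .var X => η X
  | .app c ts => .app c (ts.attach.map fun t => t.1.applyVal η)
decreasing_by
  have := List.sizeOf_lt_of_mem t.2
  simp only [Trm.app.sizeOf_spec]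
  omega

variable {D : Type*} [Lattice D] [BoundedOrder D]

/-- The extension of a proximity relation on symbols to a proximity relation on terms:
`ext R (var X) (var X) = ⊤`, `ext R t s = ⊥` if exactly one of `t`, `s` is a variable or
they are applications of different arities, and
`ext R (c(t₁,…,tₙ)) (c'(s₁,…,sₙ)) = R c c' ⊓ ext R t₁ s₁ ⊓ ⋯ ⊓ ext R tₙ sₙ`. -/
def Trm.ext [DecidableEq V] (R : CS → CS → D) : Trm V CS → Trm V CS → D
  | .var X, .var Y => if X = Y then (⊤ : D) else ⊥
  | .var _, .app _ _ => ⊥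
  | .app _ _, .var _ => ⊥
  | .app c ts, .app c' ss =>
      if ts.length = ss.length then
        R c c' ⊓ ((ts.zip ss).attach.map (fun p => Trm.ext R p.1.1 p.1.2)).foldr (· ⊓ ·) ⊤
      else ⊥
termination_by t _ => sizeOf t
decreasing_by
  have h1 : p.1.1 ∈ ts := (List.of_mem_zip p.2).1
  have := List.sizeOf_lt_of_mem h1
  simp only [Trm.app.sizeOf_spec]
  omega

/-- Constraints over terms: primitive atoms, equations, conjunction and
existential quantification. -/
inductive Constr (V CS PP : Type*) : Type _
  | prim : PP → List (Trm V CS) → Constr V CS PP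
  | eq : Trm V CS → Trm V CS → Constr V CS PP
  | and : Constr V CS PP → Constr V CS PP → Constr V CS PP
  | ex : V → Constr V CS PP → Constr V CS PP

/-- Satisfaction of a constraint by a valuation, relative to an interpretation `pI` of the
primitive predicates over ground terms.  An equation is true iff both sides evaluate to the
same ground term. -/
def Constr.sat [DecidableEq V] (pI : PP → List (Trm Empty CS) → Prop)
    (η : V → Trm Empty CS) : Constr V CS PP → Prop
  | .prim p ts => pI p (ts.map (Trm.applyVal η))
  | .eq t s => t.applyVal η = s.applyVal η
  | .and c₁ c₂ => c₁.sat pI η ∧ c₂.sat pI η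
  | .ex X c => ∃ u : Trm Empty CS, c.sat pI (Function.update η X u)

/-- The set of solutions of a set of constraints. -/
def Sol [DecidableEq V] (pI : PP → List (Trm Empty CS) → Prop)
    (Pi : Set (Constr V CS PP)) : Set (V → Trm Empty CS) :=
  {η | ∀ c ∈ Pi, c.sat pI η}

/-- Entailment `Π ⊨_C π` of a constraint by a set of constraints. -/
def Entails [DecidableEq V] (pI : PP → List (Trm Empty CS) → Prop)
    (Pi : Set (Constr V CS PP)) (c : Constr V CS PP) : Prop :=
  ∀ η ∈ Sol pI Pi, c.sat pI η

/-- Semantic form of the entailment `Π' ⊨_C Πθ`: every solution of `Π'`, composed with the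
substitution `θ`, is a solution of `Π`. -/
def EntailsSubst [DecidableEq V] (pI : PP → List (Trm Empty CS) → Prop)
    (Pi' : Set (Constr V CS PP)) (θ : V → Trm V CS) (Pi : Set (Constr V CS PP)) : Prop :=
  ∀ η ∈ Sol pI Pi', (fun X => (θ X).applyVal η) ∈ Sol pI Pi

/-- Constraint-based term proximity: `t ≈_{d,Π} s` iff there are terms `t̂`, `ŝ` with
`Π ⊨_C t == t̂`, `Π ⊨_C s == ŝ` and `ext R t̂ ŝ ⊒ d`. -/
def TermClose [DecidableEq V] (R : CS → CS → D) (pI : PP → List (Trm Empty CS) → Prop)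
    (d : D) (Pi : Set (Constr V CS PP)) (t s : Trm V CS) : Prop :=
  ∃ th sh : Trm V CS,
    Entails pI Pi (Constr.eq t th) ∧ Entails pI Pi (Constr.eq s sh) ∧ d ≤ Trm.ext R th sh

/-- Atoms: defined atoms, primitive atoms and equations. -/
inductive Atom (V CS DP PP : Type*) : Type _
  | defd : DP → List (Trm V CS) → Atom V CS DP PP
  | prim : PP → List (Trm V CS) → Atom V CS DP PP
  | eq : Trm V CS → Trm V CS → Atom V CS DP PP

/-- Application of a substitution to an atom. -/
def Atom.subst (θ : V → Trm V CS) : Atom V CS DP PP → Atom V CS DP PP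
  | .defd r ts => .defd r (ts.map (Trm.subst θ))
  | .prim p ts => .prim p (ts.map (Trm.subst θ))
  | .eq t s => .eq (t.subst θ) (s.subst θ)

/-- A defined atom. -/
def Atom.IsDefined : Atom V CS DP PP → Prop
  | .defd _ _ => True
  | .prim _ _ => False
  | .eq _ _ => False

/-- A qualified constrained atom (qc-atom) `A#d ⇐ Π`. -/
structure QCAtom (V CS DP PP D : Type*) where
  atom : Atom V CS DP PP
  deg : D
  cons : Set (Constr V CS PP)

/-- A qc-atom is observable iff its qualification value is not `⊥` and its constraint
set is satisfiable. -/
def Observable [DecidableEq V] (pI : PP → List (Trm Empty CS) → Prop)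
    (φ : QCAtom V CS DP PP D) : Prop :=
  φ.deg ≠ ⊥ ∧ (Sol pI φ.cons).Nonempty

/-- The entailment relation `φ ⊨_{Q,C} φ'` between qc-atoms: there is a substitution `θ`
with `A' = Aθ`, `d' ⊑ d` and `Π' ⊨_C Πθ`. -/
def QCEntails [DecidableEq V] (pI : PP → List (Trm Empty CS) → Prop)
    (φ φ' : QCAtom V CS DP PP D) : Prop :=
  ∃ θ : V → Trm V CS,
    φ'.atom = φ.atom.subst θ ∧ φ'.deg ≤ φ.deg ∧ EntailsSubst pI φ'.cons θ φ.cons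

/-- A qc-interpretation: a set of defined observable qc-atoms closed under `⊨_{Q,C}`. -/
def IsInterp [DecidableEq V] (pI : PP → List (Trm Empty CS) → Prop)
    (I : Set (QCAtom V CS DP PP D)) : Prop :=
  (∀ φ ∈ I, φ.atom.IsDefined ∧ Observable pI φ) ∧
  (∀ φ ∈ I, ∀ φ' : QCAtom V CS DP PP D,
    QCEntails pI φ φ' → Observable pI φ' → φ' ∈ I)

/-- Validity of an observable qc-atom in a qc-interpretation. -/
def Valid [DecidableEq V] (R : CS → CS → D) (pI : PP → List (Trm Empty CS) → Prop)
    (I : Set (QCAtom V CS DP PP D)) (φ : QCAtom V CS DP PP D) : Prop :=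
  match φ.atom with
  | .defd _ _ => φ ∈ I
  | .prim p ts => Entails pI φ.cons (Constr.prim p ts)
  | .eq t s => TermClose R pI φ.deg φ.cons t s

/-- A `Q`-valued proximity relation on the symbols (variables, data constructors, defined
predicates, primitive predicates): it is determined by its restrictions to data constructors
and to defined predicate symbols, since it behaves as the identity on variables and is `⊥`
between symbols of different kinds (and on primitive predicates it is only nonbottom between
equal symbols). -/
structure ProximityRel (D : Type*) [Lattice D] [BoundedOrder D] {CS DP : Type*}
    (arC : CS → ℕ) (arD : DP → ℕ) where
  dc : CS → CS → D
  dp : DP → DP → D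
  dc_refl : ∀ c, dc c c = ⊤
  dc_symm : ∀ c c', dc c c' = dc c' c
  dc_arity : ∀ c c', dc c c' ≠ ⊥ → arC c = arC c'
  dp_refl : ∀ r, dp r r = ⊤
  dp_symm : ∀ r r', dp r r' = dp r' r
  dp_arity : ∀ r r', dp r r' ≠ ⊥ → arD r = arD r'

/-- A program clause `p(t₁,…,tₙ) ←α– B₁#w₁, …, Bₘ#wₘ`; a threshold `wⱼ` is either `some w`
with `w ∈ D` or `none` (standing for `?`). -/
structure Clause (V CS DP PP D : Type*) where
  headPred : DP
  headArgs : List (Trm V CS)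
  att : D
  body : List (Atom V CS DP PP × Option D)

/-- Well-formedness of a clause: the attenuation factor and all thresholds are `≠ ⊥`. -/
def ClauseWF (C : Clause V CS DP PP D) : Prop :=
  C.att ≠ ⊥ ∧ ∀ bw ∈ C.body, ∀ w, bw.2 = some w → w ≠ (⊥ : D)

/-- A SQCLP program: a set of well-formed clauses. -/
def ProgWF (P : Set (Clause V CS DP PP D)) : Prop := ∀ C ∈ P, ClauseWF C

/-- `e ⊒? w`: trivially true for `w = ?`, and `w ⊑ e` otherwise. -/
def MeetsThreshold (e : D) : Option D → Prop
  | none => True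
  | some w => w ≤ e

/-- The observable defined qc-atom `φ : p'(t'₁,…,t'ₙ)#d ⇐ Π` is an immediate consequence of
the qc-interpretation `I` via the clause `C`. -/
def ImmCons [DecidableEq V] (Q : QualificationDomain D) {arC : CS → ℕ} {arD : DP → ℕ}
    (Rl : ProximityRel D arC arD) (pI : PP → List (Trm Empty CS) → Prop)
    (I : Set (QCAtom V CS DP PP D)) (C : Clause V CS DP PP D)
    (φ : QCAtom V CS DP PP D) : Prop :=
  ∃ (p' : DP) (ts' : List (Trm V CS)),
    φ.atom = Atom.defd p' ts' ∧ Observable pI φ ∧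
    ∃ (θ : V → Trm V CS) (hn : C.headArgs.length = ts'.length)
      (ds : Fin ts'.length → D) (es : Fin C.body.length → D),
      Rl.dp p' C.headPred ≠ ⊥ ∧
      (∀ i, ds i ≠ ⊥) ∧ (∀ j, es j ≠ ⊥) ∧
      (∀ i : Fin ts'.length,
        TermClose Rl.dc pI (ds i) φ.cons (ts'.get i)
          ((C.headArgs.get (Fin.cast hn.symm i)).subst θ)) ∧
      (∀ j : Fin C.body.length,
        Valid Rl.dc pI I ⟨((C.body.get j).1.subst θ), es j, φ.cons⟩) ∧
      (∀ j : Fin C.body.length, MeetsThreshold (es j) (C.body.get j).2) ∧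
      φ.deg ≤ (Rl.dp p' C.headPred ⊓ Finset.univ.inf ds) ⊓ Q.att C.att (Finset.univ.inf es)

/-- The interpretation transformer `T_P`. -/
def Tp [DecidableEq V] (Q : QualificationDomain D) {arC : CS → ℕ} {arD : DP → ℕ}
    (Rl : ProximityRel D arC arD) (pI : PP → List (Trm Empty CS) → Prop)
    (P : Set (Clause V CS DP PP D)) (I : Set (QCAtom V CS DP PP D)) :
    Set (QCAtom V CS DP PP D) :=
  {φ | ∃ C ∈ P, ImmCons Q Rl pI I C φ}

/-- `I` is a model of the clause `C`. -/
def ModelsClause [DecidableEq V] (Q : QualificationDomain D) {arC : CS → ℕ} {arD : DP → ℕ}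
    (Rl : ProximityRel D arC arD) (pI : PP → List (Trm Empty CS) → Prop)
    (I : Set (QCAtom V CS DP PP D)) (C : Clause V CS DP PP D) : Prop :=
  ∀ φ, ImmCons Q Rl pI I C φ → φ ∈ I

/-- `I ⊨_{ℛ,Q,C} P` : `I` is a model of the program `P`. -/
def ModelsProg [DecidableEq V] (Q : QualificationDomain D) {arC : CS → ℕ} {arD : DP → ℕ}
    (Rl : ProximityRel D arC arD) (pI : PP → List (Trm Empty CS) → Prop)
    (I : Set (QCAtom V CS DP PP D)) (P : Set (Clause V CS DP PP D)) : Prop :=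
  ∀ C ∈ P, ModelsClause Q Rl pI I C

/-- Derivability `P ⊢_{ℛ,Q,C} φ` in the Proximity-based Qualified Constrained Horn Logic
SQCHL(ℛ,Q,C), with inference rules SQDA, SQEA and SQPA. -/
inductive Deriv [DecidableEq V] (Q : QualificationDomain D) {arC : CS → ℕ} {arD : DP → ℕ}
    (Rl : ProximityRel D arC arD) (pI : PP → List (Trm Empty CS) → Prop)
    (P : Set (Clause V CS DP PP D)) : QCAtom V CS DP PP D → Prop
  | sqea : ∀ (d : D) (Pi : Set (Constr V CS PP)) (t s : Trm V CS),
      d ≠ ⊥ → TermClose Rl.dc pI d Pi t s → Deriv Q Rl pI P ⟨Atom.eq t s, d, Pi⟩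
  | sqpa : ∀ (d : D) (Pi : Set (Constr V CS PP)) (p : PP) (ts : List (Trm V CS)),
      d ≠ ⊥ → Entails pI Pi (Constr.prim p ts) → Deriv Q Rl pI P ⟨Atom.prim p ts, d, Pi⟩
  | sqda : ∀ (C : Clause V CS DP PP D), C ∈ P →
      ∀ (θ : V → Trm V CS) (p' : DP) (ts' : List (Trm V CS)) (d : D)
        (Pi : Set (Constr V CS PP)) (hn : C.headArgs.length = ts'.length)
        (ds : Fin ts'.length → D) (es : Fin C.body.length → D),
      Rl.dp p' C.headPred ≠ ⊥ →
      (∀ i, ds i ≠ ⊥) → (∀ j, es j ≠ ⊥) →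
      (∀ i : Fin ts'.length,
        Deriv Q Rl pI P
          ⟨Atom.eq (ts'.get i) ((C.headArgs.get (Fin.cast hn.symm i)).subst θ), ds i, Pi⟩) →
      (∀ j : Fin C.body.length,
        Deriv Q Rl pI P ⟨((C.body.get j).1.subst θ), es j, Pi⟩) →
      (∀ j : Fin C.body.length, MeetsThreshold (es j) (C.body.get j).2) →
      d ≤ (Rl.dp p' C.headPred ⊓ Finset.univ.inf ds) ⊓ Q.att C.att (Finset.univ.inf es) →
      Deriv Q Rl pI P ⟨Atom.defd p' ts', d, Pi⟩

/-! The observable defined qc-atoms derivable from `P` form a qc-interpretation (derivations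
survive instantiation because term proximity does, `ext R t s ≤ ext R tθ sθ`) and a model of `P`
(a body atom is valid in this set exactly when it is derivable, which is what SQDA needs), so they
contain the least model. Conversely, by induction on derivations, every observable derivable
qc-atom is valid in every model of `P`. -/

lemma Trm.subst_var (θ : V → Trm V CS) (X : V) : Trm.subst θ (.var X) = θ X := by
  rw [Trm.subst]

lemma Trm.subst_app (θ : V → Trm V CS) (c : CS) (ts : List (Trm V CS)) :
    Trm.subst θ (.app c ts) = .app c (ts.map (Trm.subst θ)) := by
  rw [Trm.subst, List.attach_map_val (l := ts) (f := Trm.subst θ)]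

lemma Trm.applyVal_var (η : V → Trm Empty CS) (X : V) :
    Trm.applyVal η (.var X) = η X := by
  rw [Trm.applyVal]

lemma Trm.applyVal_app (η : V → Trm Empty CS) (c : CS) (ts : List (Trm V CS)) :
    Trm.applyVal η (.app c ts) = .app c (ts.map (Trm.applyVal η)) := by
  rw [Trm.applyVal, List.attach_map_val (l := ts) (f := Trm.applyVal η)]

lemma Trm.applyVal_subst (θ : V → Trm V CS) (η : V → Trm Empty CS) :
    ∀ t : Trm V CS, (t.subst θ).applyVal η = t.applyVal (fun X => (θ X).applyVal η)
  | .var X => by rw [Trm.subst_var, Trm.applyVal_var]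
  | .app c ts => by
      rw [Trm.subst_app, Trm.applyVal_app, Trm.applyVal_app, List.map_map]
      exact congrArg _ (List.map_congr_left fun t ht => Trm.applyVal_subst θ η t)
termination_by t => sizeOf t
decreasing_by
  have := List.sizeOf_lt_of_mem ht
  simp only [Trm.app.sizeOf_spec]
  omega

lemma Trm.subst_subst (θ₀ θ : V → Trm V CS) :
    ∀ t : Trm V CS, (t.subst θ₀).subst θ = t.subst (fun X => (θ₀ X).subst θ)
  | .var X => by rw [Trm.subst_var, Trm.subst_var]
  | .app c ts => by
      rw [Trm.subst_app, Trm.subst_app, Trm.subst_app, List.map_map]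
      exact congrArg _ (List.map_congr_left fun t ht => Trm.subst_subst θ₀ θ t)
termination_by t => sizeOf t
decreasing_by
  have := List.sizeOf_lt_of_mem ht
  simp only [Trm.app.sizeOf_spec]
  omega

lemma Atom.subst_subst (θ₀ θ : V → Trm V CS) (A : Atom V CS DP PP) :
    (A.subst θ₀).subst θ = A.subst (fun X => (θ₀ X).subst θ) := by
  cases A <;> simp [Atom.subst, List.map_map, Trm.subst_subst, Function.comp_def]

lemma Atom.isDefined_subst (θ : V → Trm V CS) (A : Atom V CS DP PP) :
    (A.subst θ).IsDefined ↔ A.IsDefined := by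
  cases A <;> rfl

lemma List.le_foldr_inf_iff {a : D} {l : List D} :
    a ≤ l.foldr (· ⊓ ·) ⊤ ↔ ∀ b ∈ l, a ≤ b := by
  rw [← Multiset.inf_coe, Multiset.le_inf]
  rfl

lemma Fin.inf_univ_comp_cast {n m : ℕ} (h : n = m) (f : Fin m → D) :
    (Finset.univ.inf fun i : Fin n => f (Fin.cast h i)) = Finset.univ.inf f := by
  subst h
  rfl

section Ext

variable [DecidableEq V]

lemma Trm.ext_app (R : CS → CS → D) (c c' : CS) (ts ss : List (Trm V CS)) :
    Trm.ext R (.app c ts) (.app c' ss) =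
      if ts.length = ss.length then
        R c c' ⊓ ((ts.zip ss).map (fun p => Trm.ext R p.1 p.2)).foldr (· ⊓ ·) ⊤
      else ⊥ := by
  rw [Trm.ext, List.attach_map_val (l := ts.zip ss) (f := fun p => Trm.ext R p.1 p.2)]

lemma Trm.ext_self {R : CS → CS → D} (hR : ∀ c, R c c = ⊤) :
    ∀ t : Trm V CS, Trm.ext R t t = ⊤
  | .var X => by rw [Trm.ext, if_pos rfl]
  | .app c ts => by
      rw [Trm.ext_app, if_pos rfl, hR, top_inf_eq, ← top_le_iff, List.le_foldr_inf_iff]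
      intro b hb
      rw [List.zip_eq_zipWith, List.zipWith_self, List.map_map] at hb
      obtain ⟨t, ht, rfl⟩ := List.mem_map.1 hb
      exact (Trm.ext_self hR t).ge
termination_by t => sizeOf t
decreasing_by
  have := List.sizeOf_lt_of_mem ht
  simp only [Trm.app.sizeOf_spec]
  omega

lemma Trm.ext_le_ext_subst {R : CS → CS → D} (hR : ∀ c, R c c = ⊤) (θ : V → Trm V CS) :
    ∀ t s : Trm V CS, Trm.ext R t s ≤ Trm.ext R (t.subst θ) (s.subst θ)
  | .var X, .var Y => by
      by_cases h : X = Y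
      · subst h
        rw [Trm.subst_var, Trm.ext_self hR, Trm.ext_self hR]
      · rw [Trm.ext, if_neg h]; exact bot_le
  | .var X, .app c ss => by rw [Trm.ext]; exact bot_le
  | .app c ts, .var Y => by rw [Trm.ext]; exact bot_le
  | .app c ts, .app c' ss => by
      rw [Trm.ext_app, Trm.subst_app, Trm.subst_app, Trm.ext_app, List.length_map,
        List.length_map]
      split_ifs
      · refine inf_le_inf_left _ (List.le_foldr_inf_iff.2 fun b hb => ?_)
        rw [List.zip_map, List.map_map] at hb
        obtain ⟨p, hp, rfl⟩ := List.mem_map.1 hb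
        have h1 : p.1 ∈ ts := (List.of_mem_zip hp).1
        exact (List.le_foldr_inf_iff.1 le_rfl _ (List.mem_map_of_mem hp)).trans
          (Trm.ext_le_ext_subst hR θ p.1 p.2)
      · exact le_rfl
termination_by t _ => sizeOf t
decreasing_by
  have := List.sizeOf_lt_of_mem h1
  simp only [Trm.app.sizeOf_spec]
  omega

end Ext

section Theorems

variable {V CS DP PP D : Type*} [DecidableEq V] [Lattice D] [BoundedOrder D]
variable {arC : CS → ℕ} {arD : DP → ℕ}

section Subst

variable {R : CS → CS → D} {pI : PP → List (Trm Empty CS) → Prop}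
  {Pi Pi' : Set (Constr V CS PP)} {θ : V → Trm V CS}

lemma Entails.eq_subst {t s : Trm V CS} (h : Entails pI Pi (Constr.eq t s))
    (hE : EntailsSubst pI Pi' θ Pi) : Entails pI Pi' (Constr.eq (t.subst θ) (s.subst θ)) := by
  intro η hη
  simpa only [Constr.sat, Trm.applyVal_subst] using h _ (hE η hη)

lemma Entails.prim_subst {p : PP} {ts : List (Trm V CS)}
    (h : Entails pI Pi (Constr.prim p ts)) (hE : EntailsSubst pI Pi' θ Pi) :
    Entails pI Pi' (Constr.prim p (ts.map (Trm.subst θ))) := by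
  intro η hη
  simpa only [Constr.sat, List.map_map, Function.comp_def, Trm.applyVal_subst]
    using h _ (hE η hη)

lemma TermClose.mono {d d' : D} {t s : Trm V CS} (hd : d' ≤ d)
    (h : TermClose R pI d Pi t s) : TermClose R pI d' Pi t s :=
  let ⟨th, sh, ht, hs, hle⟩ := h
  ⟨th, sh, ht, hs, hd.trans hle⟩

lemma TermClose.subst (hR : ∀ c, R c c = ⊤) {d : D} {t s : Trm V CS}
    (h : TermClose R pI d Pi t s) (hE : EntailsSubst pI Pi' θ Pi) :
    TermClose R pI d Pi' (t.subst θ) (s.subst θ) :=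
  let ⟨th, sh, ht, hs, hle⟩ := h
  ⟨th.subst θ, sh.subst θ, ht.eq_subst hE, hs.eq_subst hE,
    hle.trans (Trm.ext_le_ext_subst hR θ th sh)⟩

end Subst

section Derivability

variable (Q : QualificationDomain D) (Rl : ProximityRel D arC arD)
  (pI : PP → List (Trm Empty CS) → Prop) (P : Set (Clause V CS DP PP D))

/-- Closure of `⊢` under `⊨_{Q,C}`. -/
lemma Deriv.subst {φ : QCAtom V CS DP PP D} (h : Deriv Q Rl pI P φ) :
    ∀ (θ : V → Trm V CS) (Pi' : Set (Constr V CS PP)) (d' : D), d' ≠ ⊥ →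
      d' ≤ φ.deg → EntailsSubst pI Pi' θ φ.cons →
      Deriv Q Rl pI P ⟨φ.atom.subst θ, d', Pi'⟩ := by
  induction h with
  | sqea _ _ _ _ _ hc =>
      intro θ Pi' d' hd' hle hE
      exact .sqea d' Pi' _ _ hd' ((hc.subst Rl.dc_refl hE).mono hle)
  | sqpa _ _ p _ _ hc =>
      intro θ Pi' d' hd' _ hE
      exact .sqpa d' Pi' p _ hd' (hc.prim_subst hE)
  | sqda C hC θ₀ p' ts' _ _ hn ds es hdp hds hes _ _ hthr hd ihargs ihbody =>
      intro θ Pi' d' hd' hle hE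
      have hlen : (ts'.map (Trm.subst θ)).length = ts'.length := List.length_map _
      refine .sqda C hC (fun X => (θ₀ X).subst θ) p' (ts'.map (Trm.subst θ)) d' Pi'
        (hn.trans hlen.symm) (fun i => ds (Fin.cast hlen i)) es hdp (fun i => hds _) hes
        (fun i => ?_) (fun j => ?_) hthr ?_
      · simpa [Atom.subst, Trm.subst_subst] using
          ihargs (Fin.cast hlen i) θ Pi' _ (hds _) le_rfl hE
      · simpa [Atom.subst_subst] using ihbody j θ Pi' (es j) (hes j) le_rfl hE
      · rw [Fin.inf_univ_comp_cast hlen ds]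
        exact hle.trans hd

lemma Deriv.valid_of_modelsProg {M : Set (QCAtom V CS DP PP D)}
    (hM : ModelsProg Q Rl pI M P) {φ : QCAtom V CS DP PP D} (h : Deriv Q Rl pI P φ) :
    Observable pI φ → Valid Rl.dc pI M φ := by
  induction h with
  | sqea _ _ _ _ _ hc => exact fun _ => hc
  | sqpa _ _ _ _ _ hc => exact fun _ => hc
  | sqda C hC θ p' ts' _ _ hn ds es hdp hds hes _ _ hthr hd ihargs ihbody =>
      intro hobs
      exact hM C hC _ ⟨p', ts', rfl, hobs, θ, hn, ds, es, hdp, hds, hes,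
        fun i => ihargs i ⟨hds i, hobs.2⟩, fun j => ihbody j ⟨hes j, hobs.2⟩, hthr, hd⟩

def derivableAtoms : Set (QCAtom V CS DP PP D) :=
  {φ | (φ.atom.IsDefined ∧ Observable pI φ) ∧ Deriv Q Rl pI P φ}

lemma isInterp_derivableAtoms : IsInterp pI (derivableAtoms Q Rl pI P) := by
  refine ⟨fun φ hφ => hφ.1, ?_⟩
  rintro ⟨A, d, Pi⟩ ⟨⟨hdef, -⟩, hder⟩ ⟨A', d', Pi'⟩ ⟨θ, hA, hd, hE⟩ hobs'
  dsimp only at hA hd hE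
  subst hA
  exact ⟨⟨(Atom.isDefined_subst θ A).2 hdef, hobs'⟩,
    hder.subst Q Rl pI P θ Pi' d' hobs'.1 hd hE⟩

lemma deriv_of_valid_derivableAtoms {A : Atom V CS DP PP} {e : D} {Pi : Set (Constr V CS PP)}
    (he : e ≠ ⊥) (h : Valid Rl.dc pI (derivableAtoms Q Rl pI P) ⟨A, e, Pi⟩) :
    Deriv Q Rl pI P ⟨A, e, Pi⟩ := by
  cases A with
  | defd _ _ => exact h.2
  | prim _ _ => exact .sqpa _ _ _ _ he h
  | eq _ _ => exact .sqea _ _ _ _ he h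

lemma modelsProg_derivableAtoms : ModelsProg Q Rl pI (derivableAtoms Q Rl pI P) P := by
  rintro C hC ⟨A, d, Pi⟩
    ⟨p', ts', hA, hobs, θ, hn, ds, es, hdp, hds, hes, hargs, hbody, hthr, hd⟩
  dsimp only at hA
  subst hA
  exact ⟨⟨trivial, hobs⟩, .sqda C hC θ p' ts' d Pi hn ds es hdp hds hes
    (fun i => .sqea _ _ _ _ (hds i) (hargs i))
    (fun j => deriv_of_valid_derivableAtoms Q Rl pI P (hes j) (hbody j)) hthr hd⟩

end Derivability

lemma mem_of_valid_of_isDefined {R : CS → CS → D} {pI : PP → List (Trm Empty CS) → Prop}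
    {I : Set (QCAtom V CS DP PP D)} {φ : QCAtom V CS DP PP D}
    (hdef : φ.atom.IsDefined) (h : Valid R pI I φ) : φ ∈ I := by
  obtain ⟨A, d, Pi⟩ := φ
  cases A with
  | defd _ _ => exact h
  | prim _ _ => exact hdef.elim
  | eq _ _ => exact hdef.elim

theorem least_model_logical_characterization_general
    (Q : QualificationDomain D) (Rl : ProximityRel D arC arD)
    (pI : PP → List (Trm Empty CS) → Prop)
    (P : Set (Clause V CS DP PP D))
    (M : Set (QCAtom V CS DP PP D))
    (hMmod : ModelsProg Q Rl pI M P)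
    (hMleast : ∀ I, IsInterp pI I → ModelsProg Q Rl pI I P → M ⊆ I) :
    M = {φ : QCAtom V CS DP PP D |
          (φ.atom.IsDefined ∧ Observable pI φ) ∧ Deriv Q Rl pI P φ} := by
  refine (hMleast _ (isInterp_derivableAtoms Q Rl pI P)
    (modelsProg_derivableAtoms Q Rl pI P)).antisymm ?_
  rintro φ ⟨⟨hdef, hobs⟩, hder⟩
  exact mem_of_valid_of_isDefined hdef (hder.valid_of_modelsProg Q Rl pI P hMmod hobs)

/-- Logical characterization of least program models: the least model of
`P` equals the set of observable defined qc-atoms derivable from `P` in SQCHL(ℛ,Q,C). -/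
theorem least_model_logical_characterization
    (Q : QualificationDomain D) (Rl : ProximityRel D arC arD)
    (pI : PP → List (Trm Empty CS) → Prop)
    (P : Set (Clause V CS DP PP D)) (hP : ProgWF P)
    (M : Set (QCAtom V CS DP PP D))
    (hM : IsInterp pI M) (hMmod : ModelsProg Q Rl pI M P)
    (hMleast : ∀ I, IsInterp pI I → ModelsProg Q Rl pI I P → M ⊆ I) :
    M = {φ : QCAtom V CS DP PP D |
          (φ.atom.IsDefined ∧ Observable pI φ) ∧ Deriv Q Rl pI P φ} :=
  least_model_logical_characterization_general Q Rl pI P M hMmod hMleast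

end Theorems
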